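/- arXiv:1905.06519 — 2 statements merged into one kernel-verified Lean document; each statement's English description precedes it below -/
import Mathlib

section
/- There exists a total function s : ℚ → List ℤ satisfying the recursion: s(q) = [q] if q is an integer; otherwise, writing t = q − ⌊q⌋ for the fractional part of q, s(q) = ⌈q⌉ :: (the list s(1/t − 2) with every entry negated) if t < 1/2, and s(q) = ⌈q⌉ :: s(1/(1 − t) − 2) if t ≥ 1/2 (in particular the recursion terminates for every rational). Moreover, for every rational q, the list s(q) is a valid sequence and eval(s(q)) = q. -/
/-- A list of integers is a *valid sequence* if it is nonempty and every entry
other than the first and the last is nonzero. -/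
def Valid (l : List ℤ) : Prop :=
  l ≠ [] ∧ ∀ x ∈ (l.drop 1).dropLast, x ≠ 0

/-- The evaluation of a sequence as a rational number:
`eval [s₀] = s₀`, and `eval (s₀ :: s₁ :: rest)` is
`s₀ - 1/(2 + eval (s₁ :: rest))` if `s₁ ≥ 0`, and
`s₀ - 1 + 1/(2 + eval ((-s₁) :: (-rest)))` if `s₁ < 0`. -/
def eval : List ℤ → ℚ
  | [] => 0
  | [s] => (s : ℚ)
  | s₀ :: s₁ :: rest =>
    if 0 ≤ s₁ then (s₀ : ℚ) - 1 / (2 + eval (s₁ :: rest))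
    else (s₀ : ℚ) - 1 + 1 / (2 + eval ((s₁ :: rest).map (fun x => -x)))
termination_by l => l.length
decreasing_by all_goals simp

lemma den_add_int (q : ℚ) (n : ℤ) : (q + n).den = q.den := by
  refine Nat.dvd_antisymm ?_ ?_
  · simpa using Rat.add_den_dvd q n
  · have h := Rat.add_den_dvd (q + n) (-n)
    simpa [Rat.den_neg_eq_den] using h

lemma den_sub_int (q : ℚ) (n : ℤ) : (q - n).den = q.den := by
  rw [sub_eq_add_neg, show -(n : ℚ) = ((-n : ℤ) : ℚ) by push_cast; ring, den_add_int]

lemma key_den (q : ℚ) (h0 : 0 < q) (h1 : q < 1) : (1 / q - 2).den < q.den := by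
  have hnum : 0 < q.num := Rat.num_pos.mpr h0
  have hdvd : ((q⁻¹).den : ℤ) ∣ q.num := by
    rw [Rat.inv_def]; exact Rat.den_dvd _ _
  have h2 : ((q⁻¹).den : ℤ) ≤ q.num := Int.le_of_dvd hnum hdvd
  have h3 : q.num < (q.den : ℤ) := Rat.lt_one_iff_num_lt_denom.mpr h1
  have h4 : (1 / q - 2).den = q⁻¹.den := by
    rw [show (2 : ℚ) = ((2 : ℤ) : ℚ) by norm_num, den_sub_int, one_div]
  omega

example (q:ℚ) (h : q < 1) : q.num < (q.den:ℤ) := Rat.lt_one_iff_num_lt_denom.mpr h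

lemma frac_pos (q : ℚ) (h : q.den ≠ 1) : 0 < q - (⌊q⌋ : ℚ) := by
  have hne : (⌊q⌋ : ℚ) ≠ q := by
    intro he
    exact h (by rw [← he]; exact Rat.den_intCast _)
  have := Int.floor_le q
  exact sub_pos.mpr (lt_of_le_of_ne this hne)

lemma frac_lt_one (q : ℚ) : q - (⌊q⌋ : ℚ) < 1 := by
  have := Int.lt_floor_add_one q
  linarith

lemma frac_den (q : ℚ) : (q - (⌊q⌋ : ℚ)).den = q.den := den_sub_int q ⌊q⌋

lemma dec1 (q : ℚ) (h : q.den ≠ 1) :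
    (1 / (q - (⌊q⌋ : ℚ)) - 2).den < q.den := by
  have := key_den _ (frac_pos q h) (frac_lt_one q)
  rwa [frac_den] at this

lemma dec2 (q : ℚ) (h : q.den ≠ 1) :
    (1 / (1 - (q - (⌊q⌋ : ℚ))) - 2).den < q.den := by
  have h0 : 0 < 1 - (q - (⌊q⌋ : ℚ)) := by have := frac_lt_one q; linarith
  have h1 : 1 - (q - (⌊q⌋ : ℚ)) < 1 := by have := frac_pos q h; linarith
  have hd : (1 - (q - (⌊q⌋ : ℚ))).den = q.den := by
    rw [show (1 : ℚ) - (q - (⌊q⌋ : ℚ)) = -(q - (⌊q⌋ : ℚ) - ((1:ℤ) : ℚ)) by push_cast; ring,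
      Rat.den_neg_eq_den, den_sub_int, frac_den]
  have := key_den _ h0 h1
  rwa [hd] at this

def rep (q : ℚ) : List ℤ :=
  if h : q.den = 1 then [q.num]
  else if h2 : q - (⌊q⌋ : ℚ) < 1/2 then
    ⌈q⌉ :: (rep (1 / (q - (⌊q⌋ : ℚ)) - 2)).map (fun x => -x)
  else ⌈q⌉ :: rep (1 / (1 - (q - (⌊q⌋ : ℚ))) - 2)
termination_by q.den
decreasing_by
  · exact dec1 q h
  · exact dec2 q h

lemma rep_int {q : ℚ} (h : q.den = 1) : rep q = [q.num] := by
  rw [rep]; simp [h]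

lemma rep_lt {q : ℚ} (h : q.den ≠ 1) (h2 : q - (⌊q⌋ : ℚ) < 1/2) :
    rep q = ⌈q⌉ :: (rep (1 / (q - (⌊q⌋ : ℚ)) - 2)).map (fun x => -x) := by
  rw [rep, dif_neg h, dif_pos h2]

lemma rep_ge {q : ℚ} (h : q.den ≠ 1) (h2 : ¬ (q - (⌊q⌋ : ℚ) < 1/2)) :
    rep q = ⌈q⌉ :: rep (1 / (1 - (q - (⌊q⌋ : ℚ))) - 2) := by
  rw [rep, dif_neg h, dif_neg h2]

lemma rep_ne_nil (q : ℚ) : rep q ≠ [] := by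
  rw [rep]; split_ifs <;> simp

lemma rep_head_pos {q : ℚ} (h : 0 < q) : 0 < (rep q).headI := by
  rw [rep]; split_ifs with h1
  · simpa using Rat.num_pos.mpr h
  all_goals simpa using Int.ceil_pos.mpr h

lemma rep_head_nonneg {q : ℚ} (h : 0 ≤ q) : 0 ≤ (rep q).headI := by
  rw [rep]; split_ifs with h1
  · simpa using Rat.num_nonneg.mpr h
  all_goals simpa using Int.ceil_nonneg h

lemma eval_singleton (n : ℤ) : eval [n] = (n : ℚ) := by rw [eval]

lemma eval_cons_nonneg (c : ℤ) (l : List ℤ) (hl : l ≠ []) (hh : 0 ≤ l.headI) :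
    eval (c :: l) = (c : ℚ) - 1 / (2 + eval l) := by
  cases l with
  | nil => exact absurd rfl hl
  | cons a t =>
    rw [eval, if_pos (by simpa using hh)]

lemma eval_cons_neg (c : ℤ) (l : List ℤ) (hl : l ≠ []) (hh : 0 < l.headI) :
    eval (c :: l.map (fun x => -x)) = (c : ℚ) - 1 + 1 / (2 + eval l) := by
  cases l with
  | nil => exact absurd rfl hl
  | cons a t =>
    have ha : 0 < a := by simpa using hh
    show eval (c :: (-a) :: t.map (fun x => -x)) = _
    rw [eval, if_neg (by omega)]
    have he : ((-a) :: t.map (fun x => -x)).map (fun x => -x) = a :: t := by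
      simp [List.map_map, Function.comp]
    rw [he]

lemma valid_singleton (n : ℤ) : Valid [n] := ⟨by simp, by simp⟩

lemma Valid.map_neg {l : List ℤ} (h : Valid l) : Valid (l.map (fun x => -x)) := by
  obtain ⟨h1, h2⟩ := h
  refine ⟨by simpa using h1, ?_⟩
  intro x hx
  rw [← List.map_drop, ← List.map_dropLast, List.mem_map] at hx
  obtain ⟨y, hy, rfl⟩ := hx
  simpa using h2 y hy

lemma valid_cons (c : ℤ) {l : List ℤ} (hv : Valid l)
    (hh : l.headI ≠ 0 ∨ l.length = 1) : Valid (c :: l) := by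
  refine ⟨by simp, ?_⟩
  intro x hx
  match l with
  | [] => simp at hx
  | [a] => simp at hx
  | a :: b :: t =>
    simp only [List.drop_one, List.tail_cons, List.dropLast_cons₂, List.mem_cons] at hx
    rcases hx with rfl | hx
    · rcases hh with hh | hh
      · simpa using hh
      · simp at hh
    · exact hv.2 x (by simpa using hx)

lemma headI_map_neg {l : List ℤ} (h : l ≠ []) :
    (l.map (fun x => -x)).headI = -l.headI := by
  cases l with
  | nil => exact absurd rfl h
  | cons a t => rfl

lemma ceil_eq_floor_add_one {q : ℚ} (h : q.den ≠ 1) : (⌈q⌉ : ℚ) = (⌊q⌋ : ℚ) + 1 := by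
  have h1 : ⌊q⌋ < ⌈q⌉ := by
    rw [Int.lt_ceil]
    have := frac_pos q h
    linarith
  have h2 : ⌈q⌉ ≤ ⌊q⌋ + 1 := Int.ceil_le_floor_add_one q
  have : ⌈q⌉ = ⌊q⌋ + 1 := le_antisymm h2 h1
  exact_mod_cast this

theorem rep_main (q : ℚ) : Valid (rep q) ∧ eval (rep q) = q := by
  by_cases h : q.den = 1
  · rw [rep_int h]
    exact ⟨valid_singleton _, by rw [eval_singleton]; exact Rat.coe_int_num_of_den_eq_one h⟩
  · have ht0 : 0 < q - (⌊q⌋ : ℚ) := frac_pos q h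
    have ht1 : q - (⌊q⌋ : ℚ) < 1 := frac_lt_one q
    have hceil := ceil_eq_floor_add_one h
    by_cases h2 : q - (⌊q⌋ : ℚ) < 1/2
    · have hq'0 : 0 < 1 / (q - (⌊q⌋ : ℚ)) - 2 := by
        have : (2 : ℚ) < 1 / (q - (⌊q⌋ : ℚ)) := by
          rw [lt_div_iff₀ ht0]; linarith
        linarith
      obtain ⟨hv, he⟩ := rep_main (1 / (q - (⌊q⌋ : ℚ)) - 2)
      rw [rep_lt h h2]
      constructor
      · refine valid_cons _ hv.map_neg (Or.inl ?_)
        rw [headI_map_neg (rep_ne_nil _)]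
        have := rep_head_pos hq'0
        omega
      · rw [eval_cons_neg _ _ (rep_ne_nil _) (rep_head_pos hq'0), he]
        have hsum : (2 : ℚ) + (1 / (q - (⌊q⌋ : ℚ)) - 2) = 1 / (q - (⌊q⌋ : ℚ)) := by ring
        rw [hsum, one_div_one_div, hceil]
        ring
    · have hu0 : 0 < 1 - (q - (⌊q⌋ : ℚ)) := by linarith
      have hq'0 : 0 ≤ 1 / (1 - (q - (⌊q⌋ : ℚ))) - 2 := by
        have : (2 : ℚ) ≤ 1 / (1 - (q - (⌊q⌋ : ℚ))) := by
          rw [le_div_iff₀ hu0]; push_neg at h2; linarith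
        linarith
      obtain ⟨hv, he⟩ := rep_main (1 / (1 - (q - (⌊q⌋ : ℚ))) - 2)
      rw [rep_ge h h2]
      constructor
      · refine valid_cons _ hv ?_
        by_cases hden : (1 / (1 - (q - (⌊q⌋ : ℚ))) - 2).den = 1
        · right; rw [rep_int hden]; rfl
        · left
          have hne : (1 / (1 - (q - (⌊q⌋ : ℚ))) - 2) ≠ 0 := by
            intro h0; exact hden (by rw [h0]; rfl)
          have := rep_head_pos (lt_of_le_of_ne hq'0 (Ne.symm hne))
          omega
      · rw [eval_cons_nonneg _ _ (rep_ne_nil _) (rep_head_nonneg hq'0), he]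
        have hsum : (2 : ℚ) + (1 / (1 - (q - (⌊q⌋ : ℚ))) - 2) = 1 / (1 - (q - (⌊q⌋ : ℚ))) := by
          ring
        rw [hsum, one_div_one_div, hceil]
        ring
termination_by q.den
decreasing_by
  · exact dec1 q h
  · exact dec2 q h

theorem exists_natural_representation_function :
    ∃ s : ℚ → List ℤ,
      (∀ q : ℚ, q.den = 1 → s q = [q.num]) ∧
      (∀ q : ℚ, q.den ≠ 1 →
        (q - (⌊q⌋ : ℚ) < 1/2 →
          s q = ⌈q⌉ :: (s (1 / (q - (⌊q⌋ : ℚ)) - 2)).map (fun x => -x)) ∧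
        (1/2 ≤ q - (⌊q⌋ : ℚ) →
          s q = ⌈q⌉ :: s (1 / (1 - (q - (⌊q⌋ : ℚ))) - 2))) ∧
      (∀ q : ℚ, Valid (s q) ∧ eval (s q) = q) := by
  refine ⟨rep, fun q h => rep_int h, fun q h => ⟨fun h2 => rep_lt h h2,
    fun h2 => rep_ge h (not_lt.mpr h2)⟩, rep_main⟩
end

section
/- For every natural number n, the unique valid sequence l with eval(l) = fib(2n+1)/fib(2n+2) is the list consisting of a 1 followed by n further 1's; in particular the natural representation of fib(2n+1)/fib(2n+2) has length n + 1. -/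
lemma eval_single (s : ℤ) : eval [s] = (s:ℚ) := by simp [eval]

lemma eval_cons_cons (s₀ s₁ : ℤ) (r : List ℤ) :
    eval (s₀ :: s₁ :: r) =
      if 0 ≤ s₁ then (s₀ : ℚ) - 1 / (2 + eval (s₁ :: r))
      else (s₀ : ℚ) - 1 + 1 / (2 + eval ((s₁ :: r).map (fun x => -x))) := by
  rw [eval]

lemma valid_tail (s₀ s₁ : ℤ) (r : List ℤ) (h : Valid (s₀ :: s₁ :: r)) : Valid (s₁ :: r) := by
  refine ⟨by simp, fun x hx => ?_⟩
  apply h.2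
  rcases r.eq_nil_or_concat with rfl | ⟨r', a, rfl⟩
  · simp at hx
  · simp only [List.drop_one, List.tail_cons, List.concat_eq_append] at hx ⊢
    rw [List.dropLast_concat] at hx
    rw [show s₁ :: (r' ++ [a]) = (s₁ :: r') ++ [a] from rfl, List.dropLast_concat]
    exact List.mem_cons_of_mem _ hx

lemma valid_neg (l : List ℤ) (h : Valid l) : Valid (l.map (fun x => -x)) := by
  refine ⟨by simp [h.1], fun x hx => ?_⟩
  rw [← List.map_drop, ← List.map_dropLast] at hx
  simp only [List.mem_map] at hx
  obtain ⟨y, hy, rfl⟩ := hx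
  simpa using h.2 y hy

lemma eval_bounds : ∀ n : ℕ, ∀ s₀ : ℤ, ∀ rest : List ℤ, rest.length ≤ n → Valid (s₀ :: rest) →
    ((s₀ : ℚ) - 1 < eval (s₀ :: rest) ∧ eval (s₀ :: rest) ≤ (s₀ : ℚ) ∧
      (rest ≠ [] → eval (s₀ :: rest) < (s₀ : ℚ)) ∧
      (∀ s₁ r', rest = s₁ :: r' → s₁ < 0 → eval (s₀ :: rest) < (s₀ : ℚ) - 1/2)) := by
  intro n
  induction n with
  | zero =>
    intro s₀ rest hlen _
    have hr : rest = [] := List.eq_nil_of_length_eq_zero (Nat.le_zero.mp hlen)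
    subst hr
    exact ⟨by simp [eval_single], by simp [eval_single], by simp, by simp⟩
  | succ n ih =>
    intro s₀ rest hlen hval
    match rest with
    | [] => exact ⟨by simp [eval_single], by simp [eval_single], by simp, by simp⟩
    | s₁ :: r' =>
      by_cases hs₁ : 0 ≤ s₁
      · have hv' := valid_tail _ _ _ hval
        have hlen' : r'.length ≤ n := by simpa using hlen
        obtain ⟨h1, h2, -, -⟩ := ih s₁ r' hlen' hv'
        have hs₁q : (0:ℚ) ≤ (s₁:ℚ) := by exact_mod_cast hs₁
        have hE1 : (1:ℚ) < 2 + eval (s₁ :: r') := by linarith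
        have hpos : 0 < 1 / (2 + eval (s₁ :: r')) := by positivity
        have hlt1 : 1 / (2 + eval (s₁ :: r')) < 1 := by
          rw [div_lt_one (by linarith)]; linarith
        rw [eval_cons_cons, if_pos hs₁]
        refine ⟨by linarith, by linarith, fun _ => by linarith, ?_⟩
        intro a b hab hneg
        rw [List.cons_eq_cons] at hab
        omega
      · push_neg at hs₁
        have hs₁' : (1:ℚ) ≤ (-s₁ : ℤ) := by exact_mod_cast (by omega : (1:ℤ) ≤ -s₁)
        have hv'' := valid_neg _ (valid_tail _ _ _ hval)
        simp only [List.map_cons] at hv''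
        have hlen'' : (r'.map (fun x => -x)).length ≤ n := by simpa using hlen
        obtain ⟨h1, h2, -, -⟩ := ih (-s₁) (r'.map (fun x => -x)) hlen'' hv''
        set E := eval ((-s₁) :: r'.map (fun x => -x)) with hE
        have hEpos : (0:ℚ) < E := by linarith
        have hpos : 0 < 1 / (2 + E) := by positivity
        have hlt : 1 / (2 + E) < 1/2 := by
          rw [div_lt_div_iff₀ (by linarith) (by norm_num)]; linarith
        rw [eval_cons_cons, if_neg (by omega)]
        simp only [List.map_cons, ← hE]
        exact ⟨by linarith, by linarith, fun _ => by linarith, fun a b hab hneg => by linarith⟩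

lemma valid_ones (n : ℕ) : Valid ((1:ℤ) :: List.replicate n 1) := by
  refine ⟨by simp, fun x hx => ?_⟩
  simp only [List.drop_one, List.tail_cons] at hx
  have h1 : x ∈ List.replicate n (1:ℤ) := (List.dropLast_sublist _).subset hx
  rw [List.eq_of_mem_replicate h1]; norm_num

def q (n : ℕ) : ℚ := (Nat.fib (2*n+1) : ℚ) / (Nat.fib (2*n+2) : ℚ)

lemma fibq_pos (m : ℕ) : (0:ℚ) < Nat.fib (m+1) := by
  exact_mod_cast Nat.fib_pos.mpr (Nat.succ_pos m)

lemma q_pos (n : ℕ) : 0 < q n := div_pos (fibq_pos (2*n)) (fibq_pos (2*n+1))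

lemma q_half (n : ℕ) : 1/2 < q n := by
  rw [q, lt_div_iff₀ (fibq_pos (2*n+1))]
  have hnat : Nat.fib (2*n+2) < 2 * Nat.fib (2*n+1) := by
    rcases n with _ | m
    · norm_num
    · have h1 : Nat.fib (2*(m+1)) < Nat.fib (2*(m+1)+1) := Nat.fib_lt_fib_succ (by omega)
      have h2 : Nat.fib (2*(m+1)+2) = Nat.fib (2*(m+1)) + Nat.fib (2*(m+1)+1) :=
        Nat.fib_add_two
      omega
  have : (Nat.fib (2*n+2) : ℚ) < 2 * Nat.fib (2*n+1) := by exact_mod_cast hnat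
  linarith

lemma q_succ_lt_one (n : ℕ) : q (n+1) < 1 := by
  rw [q, div_lt_one (fibq_pos (2*(n+1)+1))]
  have : Nat.fib (2*(n+1)+1) < Nat.fib (2*(n+1)+2) := Nat.fib_lt_fib_succ (by omega)
  exact_mod_cast this

lemma q_rec (n : ℕ) : q (n+1) = 1 - 1/(2 + q n) := by
  have h1 := @Nat.fib_add_two (2*n+1)
  rw [show 2*n+1+1 = 2*n+2 by omega] at h1
  have h2 := @Nat.fib_add_two (2*n+2)
  rw [show 2*n+2+1 = 2*n+1+2 by omega, h1] at h2
  have a1 : Nat.fib (2*(n+1)+1) = Nat.fib (2*n+1) + Nat.fib (2*n+2) := by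
    rw [show 2*(n+1)+1 = 2*n+1+2 by omega]; exact h1
  have a2 : Nat.fib (2*(n+1)+2) = Nat.fib (2*n+1) + 2 * Nat.fib (2*n+2) := by
    rw [show 2*(n+1)+2 = 2*n+2+2 by omega]; omega
  have hb : (0:ℚ) < Nat.fib (2*n+2) := fibq_pos (2*n+1)
  have ha : (0:ℚ) ≤ Nat.fib (2*n+1) := by positivity
  rw [q, q, a1, a2]
  push_cast
  have h2q : (0:ℚ) < 2 + Nat.fib (2*n+1) / Nat.fib (2*n+2) := by positivity
  field_simp
  ring

theorem natural_representation_of_fib_ratio :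
    ∀ n : ℕ,
      (Valid ((1 : ℤ) :: List.replicate n 1) ∧
        eval ((1 : ℤ) :: List.replicate n 1) =
          (Nat.fib (2 * n + 1) : ℚ) / (Nat.fib (2 * n + 2) : ℚ)) ∧
      (∀ l : List ℤ, Valid l →
        eval l = (Nat.fib (2 * n + 1) : ℚ) / (Nat.fib (2 * n + 2) : ℚ) →
        l = (1 : ℤ) :: List.replicate n 1 ∧ l.length = n + 1) := by
  intro n
  induction n with
  | zero =>
    refine ⟨⟨valid_ones 0, by norm_num [eval_single]⟩, ?_⟩
    intro l hval heq
    have heq' : eval l = q 0 := heq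
    have hq0 : q 0 = 1 := by norm_num [q]
    rcases l with _ | ⟨s₀, rest⟩
    · exact absurd rfl hval.1
    obtain ⟨hb1, hb2, hb3, -⟩ := eval_bounds rest.length s₀ rest le_rfl hval
    rw [heq', hq0] at hb1 hb2 hb3
    have hs0 : s₀ = 1 := by
      have h1 : (1:ℚ) ≤ (s₀:ℚ) := hb2
      have h2 : (s₀:ℚ) - 1 < 1 := hb1
      have h1' : (1:ℤ) ≤ s₀ := by exact_mod_cast h1
      have h2' : s₀ < 2 := by exact_mod_cast (by linarith : (s₀:ℚ) < 2)
      omega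
    have hrest : rest = [] := by
      by_contra h
      have := hb3 h
      rw [hs0] at this
      norm_num at this
    subst hs0 hrest
    exact ⟨rfl, rfl⟩
  | succ n ih =>
    obtain ⟨⟨hvprev, hevprev⟩, huniq⟩ := ih
    have hqprev : eval ((1:ℤ) :: List.replicate n 1) = q n := hevprev
    have hev : eval ((1:ℤ) :: List.replicate (n+1) 1) = q (n+1) := by
      rw [List.replicate_succ, eval_cons_cons, if_pos (by norm_num), hqprev, q_rec n]
      norm_num
    refine ⟨⟨valid_ones (n+1), hev⟩, ?_⟩
    intro l hval heq
    have heq' : eval l = q (n+1) := heq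
    have hhalf := q_half (n+1)
    have hlt1 := q_succ_lt_one n
    rcases l with _ | ⟨s₀, rest⟩
    · exact absurd rfl hval.1
    obtain ⟨hb1, hb2, hb3, hb4⟩ := eval_bounds rest.length s₀ rest le_rfl hval
    rw [heq'] at hb1 hb2 hb3 hb4
    have hs0 : s₀ = 1 := by
      have h1' : (0:ℤ) < s₀ := by exact_mod_cast (by linarith : (0:ℚ) < (s₀:ℚ))
      have h2' : s₀ < 2 := by exact_mod_cast (by linarith : (s₀:ℚ) < 2)
      omega
    subst hs0
    rcases rest with _ | ⟨s₁, r'⟩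
    · rw [eval_single] at heq'
      norm_num at heq'
      linarith
    by_cases hs₁ : 0 ≤ s₁
    · rw [eval_cons_cons, if_pos hs₁] at heq'
      have hv' := valid_tail _ _ _ hval
      obtain ⟨t1, t2, -, -⟩ := eval_bounds r'.length s₁ r' le_rfl hv'
      have hs₁q : (0:ℚ) ≤ (s₁:ℚ) := by exact_mod_cast hs₁
      have h2E : (0:ℚ) < 2 + eval (s₁ :: r') := by linarith
      have h2q : (0:ℚ) < 2 + q n := by have := q_pos n; linarith
      have hE : eval (s₁ :: r') = q n := by
        rw [q_rec n] at heq'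
        have h3 : 1/(2 + eval (s₁ :: r')) = 1/(2 + q n) := by
          push_cast at heq'; linarith
        rw [div_eq_div_iff h2E.ne' h2q.ne'] at h3
        linarith
      obtain ⟨hl, hlen⟩ := huniq (s₁ :: r') hv' hE
      rw [List.replicate_succ]
      exact ⟨by rw [hl], by simp [List.length_cons, hlen]⟩
    · push_neg at hs₁
      have := hb4 s₁ r' rfl hs₁
      push_cast at this
      linarith
end
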